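/- Under the hole-punching graph-cluster randomization design with 0 < p_t < 1 and 0 < p_hp < 1, for each t ∈ {0,1} the cluster-form variance estimator V̂ar[μ̂(t)] = (1/N²)·[ (1/p(t)² − 1/p(t,t))·Σ_{c∈𝒞} Ŝ_c(t,t) + (1/p(t,t) − 1/p(t))·Q̂(t,t) ], where Ŝ_c(t,t) = Σ_{i∈c: Z_i=t} Σ_{j∈c: Z_j=t} Y_i(t)·Y_j(t) and Q̂(t,t) = Σ_{i: Z_i=t} Y_i(t)², is unbiased: E[V̂ar[μ̂(t)]] = Var[μ̂(t)]. -/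

import Mathlib

open MeasureTheory ProbabilityTheory

/-- The Bernoulli measure on `Bool` with success probability `p`. -/
noncomputable def boolBernoulliMeasure (p : ℝ) : Measure Bool :=
  ENNReal.ofReal p • Measure.dirac true + ENNReal.ofReal (1 - p) • Measure.dirac false

instance boolBernoulliMeasure.instIsFiniteMeasure (p : ℝ) :
    IsFiniteMeasure (boolBernoulliMeasure p) where
  measure_univ_lt_top := by
    simp [boolBernoulliMeasure]

/-- The hole-punching graph-cluster randomization design measure on the product space
`(C → Bool) × (Fin N → Bool)`: i.i.d. Bernoulli(`pt`) cluster-level assignments and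
i.i.d. Bernoulli(`php`) unit-level flips, all mutually independent. -/
noncomputable def designMeasure (C : Type*) [Fintype C] (N : ℕ) (pt php : ℝ) :
    Measure ((C → Bool) × (Fin N → Bool)) :=
  (Measure.pi fun _ : C => boolBernoulliMeasure pt).prod
    (Measure.pi fun _ : Fin N => boolBernoulliMeasure php)

/-- The treatment `Z_i` of unit `i`: cluster assignment XOR individual flip. -/
def treat {C : Type*} {N : ℕ} (c : Fin N → C) (i : Fin N)
    (ω : (C → Bool) × (Fin N → Bool)) : Bool :=
  xor (ω.1 (c i)) (ω.2 i)

/-- The marginal propensity `p_i(t) = Pr(Z_i = t)`. -/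
noncomputable def margProp {C : Type*} [Fintype C] {N : ℕ} (pt php : ℝ) (c : Fin N → C)
    (i : Fin N) (t : Bool) : ℝ :=
  (designMeasure C N pt php {ω | treat c i ω = t}).toReal

/-- The joint propensity `p_{ij}(t₁,t₂) = Pr(Z_i = t₁ ∧ Z_j = t₂)`. -/
noncomputable def jointProp {C : Type*} [Fintype C] {N : ℕ} (pt php : ℝ) (c : Fin N → C)
    (i j : Fin N) (t1 t2 : Bool) : ℝ :=
  (designMeasure C N pt php {ω | treat c i ω = t1 ∧ treat c j ω = t2}).toReal

/-- The Horvitz–Thompson estimator `μ̂(t)`. -/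
noncomputable def htEst {C : Type*} [Fintype C] {N : ℕ} (pt php : ℝ) (c : Fin N → C)
    (Y : Fin N → Bool → ℝ) (t : Bool) (ω : (C → Bool) × (Fin N → Bool)) : ℝ :=
  (1 / (N : ℝ)) * ∑ i, if treat c i ω = t then Y i t / margProp pt php c i t else 0

/-- The realized within-cluster sum `Ŝ_c(t1,t2) = Σ_{i∈c: Z_i=t1} Σ_{j∈c: Z_j=t2} Y_i(t1)·Y_j(t2)`
for cluster `k`, as a function of the random assignment `ω`. -/
noncomputable def Shat {C : Type*} [DecidableEq C] {N : ℕ} (c : Fin N → C)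
    (Y : Fin N → Bool → ℝ) (t1 t2 : Bool) (k : C)
    (ω : (C → Bool) × (Fin N → Bool)) : ℝ :=
  ∑ i ∈ Finset.univ.filter (fun i => c i = k ∧ treat c i ω = t1),
    ∑ j ∈ Finset.univ.filter (fun j => c j = k ∧ treat c j ω = t2), Y i t1 * Y j t2

/-- The realized diagonal sum `Q̂(t,t) = Σ_{i: Z_i=t} Y_i(t)²`, as a function of the random
assignment `ω`. -/
noncomputable def Qhat {C : Type*} {N : ℕ} (c : Fin N → C)
    (Y : Fin N → Bool → ℝ) (t : Bool) (ω : (C → Bool) × (Fin N → Bool)) : ℝ :=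
  ∑ i ∈ Finset.univ.filter (fun i => treat c i ω = t), Y i t ^ 2

/-- The cluster-form variance estimator
`V̂ar[μ̂(t)] = (1/N²)·[(1/p(t)² − 1/p(t,t))·Σ_c Ŝ_c(t,t) + (1/p(t,t) − 1/p(t))·Q̂(t,t)]`. -/
noncomputable def varHat {C : Type*} [Fintype C] [DecidableEq C] {N : ℕ} (c : Fin N → C)
    (Y : Fin N → Bool → ℝ) (p : Bool → ℝ) (pj : Bool → Bool → ℝ) (t : Bool)
    (ω : (C → Bool) × (Fin N → Bool)) : ℝ :=
  (1 / (N : ℝ) ^ 2) *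
    ((1 / (p t) ^ 2 - 1 / pj t t) * (∑ k : C, Shat c Y t t k ω)
      + (1 / pj t t - 1 / p t) * Qhat c Y t ω)

/-- The cluster-form covariance estimator
`Ĉov[μ̂(t1),μ̂(t2)] = (1/N²)·[(1/(p(t1)·p(t2)) − 1/p(t1,t2))·Σ_c Ŝ_c(t1,t2)
− Q̂(t1,t1)/(2·p(t1)) − Q̂(t2,t2)/(2·p(t2))]`. -/
noncomputable def covHat {C : Type*} [Fintype C] [DecidableEq C] {N : ℕ} (c : Fin N → C)
    (Y : Fin N → Bool → ℝ) (p : Bool → ℝ) (pj : Bool → Bool → ℝ) (t1 t2 : Bool)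
    (ω : (C → Bool) × (Fin N → Bool)) : ℝ :=
  (1 / (N : ℝ) ^ 2) *
    ((1 / (p t1 * p t2) - 1 / pj t1 t2) * (∑ k : C, Shat c Y t1 t2 k ω)
      - Qhat c Y t1 ω / (2 * p t1) - Qhat c Y t2 ω / (2 * p t2))

/-- The covariance of two real random variables: `Cov[X,Y] = E[(X − E X)(Y − E Y)]`. -/
noncomputable def cov {Ω : Type*} [MeasurableSpace Ω] (P : Measure Ω) (X Y : Ω → ℝ) : ℝ :=
  ∫ ω, (X ω - ∫ x, X x ∂P) * (Y ω - ∫ x, Y x ∂P) ∂P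

/-!
Writing `μ̂(t)` as a sum of indicators of the events `{Z_i = t}` gives
`Var[μ̂(t)] = N⁻² ∑_{i,j} (p_{ij} - p_i p_j) Y_i Y_j / p²`, while the estimator is a sum of
indicators of `{Z_i = Z_j = t}` with weights
`w_{ij} = [c i = c j] (1/p² - 1/p(t,t)) + [i = j] (1/p(t,t) - 1/p)`, so that its expectation is
`N⁻² ∑_{i,j} p_{ij} w_{ij} Y_i Y_j`. The two sums agree term by term: for `i = j` both
coefficients are `1/p - 1`; for distinct units of one cluster both are `p(t,t)/p² - 1` (this needs
`p(t,t) > 0`, which holds since the all-`t` assignment `B ≡ 0, F ≡ t` has positive probability);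
for units of different clusters both vanish, because `Z_i` and `Z_j` are functions of disjoint
coordinates of the design, a product of Bernoulli measures indexed by `C ⊕ Fin N`.
-/

section IndicatorSums

variable {Ω ι : Type*} [MeasurableSpace Ω] {μ : Measure Ω}

lemma covariance_indicator_const [IsProbabilityMeasure μ] {A B : Set Ω} (hA : MeasurableSet A)
    (hB : MeasurableSet B) (a b : ℝ) :
    covariance (A.indicator fun _ ↦ a) (B.indicator fun _ ↦ b) μ
      = (μ.real (A ∩ B) - μ.real A * μ.real B) * (a * b) := by
  rw [covariance_eq_sub ((memLp_const a).indicator hA) ((memLp_const b).indicator hB)]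
  have hprod : (A.indicator fun _ ↦ a) * (B.indicator fun _ ↦ b)
      = (A ∩ B).indicator fun _ ↦ a * b := by
    ext ω
    exact (Set.inter_indicator_mul _ _ ω).symm
  rw [hprod, integral_indicator_const _ (hA.inter hB), integral_indicator_const _ hA,
    integral_indicator_const _ hB, smul_eq_mul, smul_eq_mul, smul_eq_mul]
  ring

variable [Fintype ι] {E : ι → Set Ω}

lemma variance_sum_indicator_const [IsProbabilityMeasure μ] (hE : ∀ i, MeasurableSet (E i))
    (a : ι → ℝ) :
    variance (fun ω ↦ ∑ i, (E i).indicator (fun _ ↦ a i) ω) μ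
      = ∑ i, ∑ j, (μ.real (E i ∩ E j) - μ.real (E i) * μ.real (E j)) * (a i * a j) := by
  have hL2 : ∀ i, MemLp ((E i).indicator fun _ ↦ a i) 2 μ :=
    fun i ↦ (memLp_const (a i)).indicator (hE i)
  rw [← covariance_self (Finset.aemeasurable_fun_sum _ fun i _ ↦ (hL2 i).aemeasurable),
    covariance_fun_sum_fun_sum hL2 hL2]
  simp_rw [covariance_indicator_const (hE _) (hE _)]

lemma integral_sum_indicator_const [IsFiniteMeasure μ] (hE : ∀ i, MeasurableSet (E i))
    (a : ι → ℝ) :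
    ∫ ω, ∑ i, (E i).indicator (fun _ ↦ a i) ω ∂μ = ∑ i, μ.real (E i) * a i := by
  rw [integral_finsetSum _ fun i _ ↦ (integrable_const (a i)).indicator (hE i)]
  simp_rw [integral_indicator_const _ (hE _), smul_eq_mul]

lemma integral_sum_sum_indicator_inter [IsFiniteMeasure μ] (hE : ∀ i, MeasurableSet (E i))
    (w : ι → ι → ℝ) :
    ∫ ω, ∑ i, ∑ j, (E i ∩ E j).indicator (fun _ ↦ w i j) ω ∂μ
      = ∑ i, ∑ j, μ.real (E i ∩ E j) * w i j := by
  rw [integral_finsetSum _ fun i _ ↦ integrable_finsetSum _ fun j _ ↦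
    (integrable_const (w i j)).indicator ((hE i).inter (hE j))]
  simp_rw [integral_sum_indicator_const fun j ↦ (hE _).inter (hE j)]

end IndicatorSums

lemma ProbabilityTheory.IndepFun.map_measurableEquiv {Ω Ω' β β' : Type*} [MeasurableSpace Ω]
    [MeasurableSpace Ω'] [MeasurableSpace β] [MeasurableSpace β'] {μ : Measure Ω} (e : Ω ≃ᵐ Ω')
    {f : Ω' → β} {g : Ω' → β'} (h : IndepFun (f ∘ e) (g ∘ e) μ) : IndepFun f g (μ.map e) := by
  rw [indepFun_iff_measure_inter_preimage_eq_mul] at h ⊢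
  intro s t hs ht
  rw [e.map_apply, e.map_apply, e.map_apply]
  exact h s t hs ht

lemma isProbabilityMeasure_boolBernoulliMeasure {p : ℝ} (h0 : 0 ≤ p) (h1 : p ≤ 1) :
    IsProbabilityMeasure (boolBernoulliMeasure p) :=
  ⟨by simp [boolBernoulliMeasure, ← ENNReal.ofReal_add h0 (sub_nonneg.2 h1)]⟩

lemma boolBernoulliMeasure_singleton_pos {p : ℝ} (h0 : 0 < p) (h1 : p < 1) (b : Bool) :
    0 < boolBernoulliMeasure p {b} := by
  cases b <;> simp [boolBernoulliMeasure, h0, h1]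

section Design

variable {C : Type*} [Fintype C] {N : ℕ} {pt php : ℝ}

instance designMeasure.instIsFiniteMeasure : IsFiniteMeasure (designMeasure C N pt php) := by
  unfold designMeasure
  infer_instance

lemma isProbabilityMeasure_designMeasure (hpt0 : 0 ≤ pt) (hpt1 : pt ≤ 1) (hphp0 : 0 ≤ php)
    (hphp1 : php ≤ 1) : IsProbabilityMeasure (designMeasure C N pt php) := by
  have := isProbabilityMeasure_boolBernoulliMeasure hpt0 hpt1
  have := isProbabilityMeasure_boolBernoulliMeasure hphp0 hphp1
  unfold designMeasure
  infer_instance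

lemma designMeasure_singleton_pos (hpt0 : 0 < pt) (hpt1 : pt < 1) (hphp0 : 0 < php)
    (hphp1 : php < 1) (ω : (C → Bool) × (Fin N → Bool)) :
    0 < designMeasure C N pt php {ω} := by
  rw [designMeasure, ← Set.singleton_prod_singleton, Measure.prod_prod, Measure.pi_singleton,
    Measure.pi_singleton]
  exact ENNReal.mul_pos
    (Finset.prod_ne_zero_iff.2 fun k _ ↦ (boolBernoulliMeasure_singleton_pos hpt0 hpt1 _).ne')
    (Finset.prod_ne_zero_iff.2 fun i _ ↦ (boolBernoulliMeasure_singleton_pos hphp0 hphp1 _).ne')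

lemma indepFun_treat (hpt0 : 0 ≤ pt) (hpt1 : pt ≤ 1) (hphp0 : 0 ≤ php) (hphp1 : php ≤ 1)
    (c : Fin N → C) {i j : Fin N} (hc : c i ≠ c j) :
    IndepFun (treat c i) (treat c j) (designMeasure C N pt php) := by
  let ν : C ⊕ Fin N → Measure Bool :=
    fun s ↦ boolBernoulliMeasure (Sum.elim (fun _ ↦ pt) (fun _ ↦ php) s)
  have : ∀ s, IsProbabilityMeasure (ν s) := fun s ↦ by
    cases s
    · exact isProbabilityMeasure_boolBernoulliMeasure hpt0 hpt1
    · exact isProbabilityMeasure_boolBernoulliMeasure hphp0 hphp1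
  have hij : i ≠ j := fun h ↦ hc (congrArg c h)
  have hcoord : iIndepFun (fun s (x : C ⊕ Fin N → Bool) ↦ x s) (Measure.pi ν) :=
    iIndepFun_pi (X := fun _ ↦ id) fun _ ↦ aemeasurable_id
  have hpairs := hcoord.indepFun_prodMk_prodMk (fun _ ↦ measurable_pi_apply _)
    (.inl (c i)) (.inr i) (.inl (c j)) (.inr j) (by simpa using hc) Sum.inl_ne_inr
    Sum.inr_ne_inl (by simpa using hij)
  have hdesign : designMeasure C N pt php
      = (Measure.pi ν).map (MeasurableEquiv.sumPiEquivProdPi _) :=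
    (measurePreserving_sumPiEquivProdPi ν).map_eq.symm
  rw [hdesign]
  exact (hpairs.comp (φ := fun b : Bool × Bool ↦ xor b.1 b.2)
    (ψ := fun b : Bool × Bool ↦ xor b.1 b.2) (measurable_of_finite _)
    (measurable_of_finite _)).map_measurableEquiv _

end Design

section Propensities

variable {C : Type*} [Fintype C] {N : ℕ} {pt php : ℝ} (c : Fin N → C)

def treatEvent (i : Fin N) (t : Bool) : Set ((C → Bool) × (Fin N → Bool)) :=
  {ω | treat c i ω = t}

lemma margProp_eq_measureReal (i : Fin N) (t : Bool) :
    margProp pt php c i t = (designMeasure C N pt php).real (treatEvent c i t) := rfl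

lemma jointProp_eq_measureReal (i j : Fin N) (t1 t2 : Bool) :
    jointProp pt php c i j t1 t2
      = (designMeasure C N pt php).real (treatEvent c i t1 ∩ treatEvent c j t2) := rfl

lemma jointProp_self (i : Fin N) (t : Bool) :
    jointProp pt php c i i t t = margProp pt php c i t := by
  rw [jointProp_eq_measureReal, Set.inter_self, margProp_eq_measureReal]

lemma jointProp_of_cluster_ne (hpt0 : 0 ≤ pt) (hpt1 : pt ≤ 1) (hphp0 : 0 ≤ php)
    (hphp1 : php ≤ 1) {i j : Fin N} (hc : c i ≠ c j) (t1 t2 : Bool) :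
    jointProp pt php c i j t1 t2 = margProp pt php c i t1 * margProp pt php c j t2 := by
  have := (indepFun_treat hpt0 hpt1 hphp0 hphp1 c hc).measure_inter_preimage_eq_mul
    {t1} {t2} (.singleton _) (.singleton _)
  rw [jointProp, margProp, margProp, ← ENNReal.toReal_mul]
  exact congrArg ENNReal.toReal this

lemma jointProp_pos (hpt0 : 0 < pt) (hpt1 : pt < 1) (hphp0 : 0 < php) (hphp1 : php < 1)
    (i j : Fin N) (t : Bool) : 0 < jointProp pt php c i j t t := by
  have hmem : ((fun _ ↦ false, fun _ ↦ t) : (C → Bool) × (Fin N → Bool))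
      ∈ treatEvent c i t ∩ treatEvent c j t := by
    simp [treatEvent, treat]
  refine ENNReal.toReal_pos (ne_of_gt ?_) (measure_ne_top _ _)
  exact (designMeasure_singleton_pos hpt0 hpt1 hphp0 hphp1 _).trans_le
    (measure_mono (Set.singleton_subset_iff.2 hmem))

lemma margProp_pos (hpt0 : 0 < pt) (hpt1 : pt < 1) (hphp0 : 0 < php) (hphp1 : php < 1)
    (i : Fin N) (t : Bool) : 0 < margProp pt php c i t :=
  jointProp_self c i t ▸ jointProp_pos c hpt0 hpt1 hphp0 hphp1 i i t

end Propensities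

section Estimators

variable {C : Type*} [Fintype C] {N : ℕ} {pt php : ℝ} (c : Fin N → C) (Y : Fin N → Bool → ℝ)

lemma htEst_eq_sum_indicator (t : Bool) :
    htEst pt php c Y t = fun ω ↦ (1 / N : ℝ) *
      ∑ i, (treatEvent c i t).indicator (fun _ ↦ Y i t / margProp pt php c i t) ω := by
  ext ω
  simp only [htEst, Set.indicator_apply, treatEvent, Set.mem_ofPred_eq]

lemma variance_htEst (hpt0 : 0 ≤ pt) (hpt1 : pt ≤ 1) (hphp0 : 0 ≤ php) (hphp1 : php ≤ 1)
    (t : Bool) :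
    variance (htEst pt php c Y t) (designMeasure C N pt php)
      = (1 / N : ℝ) ^ 2 * ∑ i, ∑ j,
          (jointProp pt php c i j t t - margProp pt php c i t * margProp pt php c j t)
            * (Y i t / margProp pt php c i t * (Y j t / margProp pt php c j t)) := by
  have := isProbabilityMeasure_designMeasure (C := C) (N := N) hpt0 hpt1 hphp0 hphp1
  rw [htEst_eq_sum_indicator, variance_const_mul,
    variance_sum_indicator_const fun _ ↦ MeasurableSet.of_discrete]
  rfl

omit [Fintype C] in
lemma Qhat_eq_sum_indicator (t : Bool) (ω : (C → Bool) × (Fin N → Bool)) :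
    Qhat c Y t ω = ∑ i, (treatEvent c i t).indicator (fun _ ↦ Y i t ^ 2) ω := by
  simp only [Qhat, Finset.sum_filter, Set.indicator_apply, treatEvent, Set.mem_ofPred_eq]

variable [DecidableEq C]

lemma sum_Shat_eq_sum_indicator (t1 t2 : Bool) (ω : (C → Bool) × (Fin N → Bool)) :
    ∑ k, Shat c Y t1 t2 k ω = ∑ i, ∑ j, (treatEvent c i t1 ∩ treatEvent c j t2).indicator
      (fun _ ↦ if c i = c j then Y i t1 * Y j t2 else 0) ω := by
  simp only [Shat, Finset.sum_filter, ite_and]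
  rw [Finset.sum_comm]
  refine Finset.sum_congr rfl fun i _ ↦ ?_
  rw [Finset.sum_ite_eq, if_pos (Finset.mem_univ _)]
  by_cases h1 : treat c i ω = t1
  · rw [if_pos h1]
    refine Finset.sum_congr rfl fun j _ ↦ ?_
    by_cases h2 : treat c j ω = t2 <;> simp [h1, h2, treatEvent, eq_comm (a := c i)]
  · simp [h1, treatEvent]

lemma integral_varHat (p : Bool → ℝ) (pj : Bool → Bool → ℝ) (t : Bool) :
    ∫ ω, varHat c Y p pj t ω ∂(designMeasure C N pt php)
      = (1 / N : ℝ) ^ 2 * ∑ i, ∑ j,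
          ((1 / p t ^ 2 - 1 / pj t t)
              * (jointProp pt php c i j t t * (if c i = c j then Y i t * Y j t else 0))
            + (1 / pj t t - 1 / p t)
              * (if i = j then margProp pt php c i t * Y i t ^ 2 else 0)) := by
  simp only [varHat, sum_Shat_eq_sum_indicator, Qhat_eq_sum_indicator]
  rw [integral_const_mul, integral_add .of_finite .of_finite, integral_const_mul,
    integral_const_mul, integral_sum_sum_indicator_inter fun _ ↦ .of_discrete,
    integral_sum_indicator_const fun _ ↦ .of_discrete]
  simp only [← jointProp_eq_measureReal, ← margProp_eq_measureReal, Finset.sum_add_distrib,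
    ← Finset.mul_sum, Finset.sum_ite_eq, Finset.mem_univ, if_true, one_div_pow]

lemma varHat_term_eq_variance_term (hpt0 : 0 < pt) (hpt1 : pt < 1) (hphp0 : 0 < php)
    (hphp1 : php < 1) {t : Bool} {p q : ℝ} (hp : ∀ i, margProp pt php c i t = p)
    (hq : ∀ i j, i ≠ j → c i = c j → jointProp pt php c i j t t = q) (x : Fin N → ℝ)
    (i j : Fin N) :
    (1 / p ^ 2 - 1 / q) * (jointProp pt php c i j t t * (if c i = c j then x i * x j else 0))
        + (1 / q - 1 / p) * (if i = j then margProp pt php c i t * x i ^ 2 else 0)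
      = (jointProp pt php c i j t t - margProp pt php c i t * margProp pt php c j t)
          * (x i / margProp pt php c i t * (x j / margProp pt php c j t)) := by
  have hp0 : p ≠ 0 := hp i ▸ (margProp_pos c hpt0 hpt1 hphp0 hphp1 i t).ne'
  rw [hp i, hp j]
  obtain rfl | hij := eq_or_ne i j
  · rw [jointProp_self, hp, if_pos rfl, if_pos rfl]
    field_simp
    ring
  by_cases hc : c i = c j
  · have hq0 : q ≠ 0 := hq i j hij hc ▸ (jointProp_pos c hpt0 hpt1 hphp0 hphp1 i j t).ne'
    rw [if_pos hc, if_neg hij, hq i j hij hc]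
    field_simp
    ring
  · rw [if_neg hc, if_neg hij, jointProp_of_cluster_ne c hpt0.le hpt1.le hphp0.le hphp1.le hc,
      hp, hp]
    ring

end Estimators

theorem variance_estimator_unbiased_general
    {C : Type*} [Fintype C] [DecidableEq C] {N : ℕ}
    (pt php : ℝ) (hpt0 : 0 < pt) (hpt1 : pt < 1) (hphp0 : 0 < php) (hphp1 : php < 1)
    (c : Fin N → C) (Y : Fin N → Bool → ℝ)
    (p : Bool → ℝ) (hp : ∀ (i : Fin N) (t : Bool), margProp pt php c i t = p t)
    (pj : Bool → Bool → ℝ)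
    (hpj : ∀ (i j : Fin N) (t1 t2 : Bool), i ≠ j → c i = c j →
      jointProp pt php c i j t1 t2 = pj t1 t2)
    (t : Bool) :
    ∫ ω, varHat c Y p pj t ω ∂(designMeasure C N pt php)
      = variance (htEst pt php c Y t) (designMeasure C N pt php) := by
  rw [integral_varHat, variance_htEst c Y hpt0.le hpt1.le hphp0.le hphp1.le]
  congr 1
  refine Finset.sum_congr rfl fun i _ ↦ Finset.sum_congr rfl fun j _ ↦ ?_
  exact varHat_term_eq_variance_term c hpt0 hpt1 hphp0 hphp1 (fun i ↦ hp i t)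
    (fun i j ↦ hpj i j t t) (fun i ↦ Y i t) i j

/-- Under the hole-punching graph-cluster randomization design with `0 < p_t < 1` and
`0 < p_hp < 1`, the cluster-form variance estimator is unbiased:
`E[V̂ar[μ̂(t)]] = Var[μ̂(t)]` for each `t ∈ {0,1}`. -/
theorem variance_estimator_unbiased
    {C : Type*} [Fintype C] [DecidableEq C] {N : ℕ} (hN : 1 ≤ N)
    (pt php : ℝ) (hpt0 : 0 < pt) (hpt1 : pt < 1) (hphp0 : 0 < php) (hphp1 : php < 1)
    (c : Fin N → C) (Y : Fin N → Bool → ℝ)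
    (p : Bool → ℝ) (hp : ∀ (i : Fin N) (t : Bool), margProp pt php c i t = p t)
    (pj : Bool → Bool → ℝ)
    (hpj : ∀ (i j : Fin N) (t1 t2 : Bool), i ≠ j → c i = c j →
      jointProp pt php c i j t1 t2 = pj t1 t2)
    (t : Bool) :
    ∫ ω, varHat c Y p pj t ω ∂(designMeasure C N pt php)
      = variance (htEst pt php c Y t) (designMeasure C N pt php) :=
  variance_estimator_unbiased_general pt php hpt0 hpt1 hphp0 hphp1 c Y p hp pj hpj t
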